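/- arXiv:cs/0008001 — 2 statements merged into one kernel-verified Lean document; each statement's English description precedes it below -/
import Mathlib

section
/- An assignment χ violates some transitivity constraint if and only if some simple cycle in G(E,χ) contains exactly one 0-edge. -/
/-!
A violated constraint is a path of 1-edges whose endpoints are joined by a 0-edge; adding that
edge closes it into a cycle with exactly one 0-edge. Cutting out the loops between repeated
vertices keeps the endpoints, so the cycle can be taken simple; it has at least three vertices
because `E` is irreflexive and an edge cannot be labelled both 0 and 1. Conversely, rotating a
cycle with a single 0-edge until that edge becomes the closing edge `(i_k, i₁)` exhibits a
violated constraint.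
-/

/-- The list of edges of the cycle determined by vertex list `l = [i₁,…,i_k]`:
successive pairs plus the closing edge `(i_k, i₁)`. -/
def cycEdges (l : List ℕ) : List (ℕ × ℕ) := l.zip (l.rotate 1)

/-- `l` is (the vertex list of) a cycle in the graph `G(E)`. -/
def IsCycle (E : ℕ → ℕ → Prop) (l : List ℕ) : Prop :=
  3 ≤ l.length ∧ ∀ p ∈ cycEdges l, E p.1 p.2

/-- The number of 0-edges of the cycle `l` under the labeling `χ`. -/
def numZeroEdges (χ : ℕ → ℕ → Bool) (l : List ℕ) : ℕ :=
  ((cycEdges l).filter (fun p => !χ p.1 p.2)).length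

/-- The assignment `χ` violates some transitivity constraint
`e_{[i₁,i₂]} ∧ ⋯ ∧ e_{[i_{k-1},i_k]} ⇒ e_{[i₁,i_k]}` over `E`. -/
def ViolatesTrans (E : ℕ → ℕ → Prop) (χ : ℕ → ℕ → Bool) : Prop :=
  ∃ l : List ℕ, 3 ≤ l.length ∧ l.Chain' E ∧
    (∀ p ∈ l.zip l.tail, χ p.1 p.2 = true) ∧
    E (l.headD 0) (l.getLastD 0) ∧ χ (l.headD 0) (l.getLastD 0) = false

/-- The simple cycle (or acyclic path) `l` has a chord: an edge of `G(E)` joining two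
vertices at positions `p < q` that are not adjacent in the cycle. -/
def HasChord (E : ℕ → ℕ → Prop) (l : List ℕ) : Prop :=
  ∃ p q : ℕ, p < q ∧ q < l.length ∧ p + 1 < q ∧ ¬(p = 0 ∧ q = l.length - 1) ∧
    E (l.getD p 0) (l.getD q 0)

namespace List

variable {α : Type*} {R : α → α → Prop}

theorem isChain_iff_forall_mem_zip_tail :
    ∀ {l : List α}, l.IsChain R ↔ ∀ p ∈ l.zip l.tail, R p.1 p.2
  | [] | [_] => by simp
  | a :: b :: t => by
    rw [isChain_cons_cons, isChain_iff_forall_mem_zip_tail]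
    simp

theorem IsChain.exists_nodup :
    ∀ {l : List α}, l.IsChain R →
      ∃ m : List α, m.Nodup ∧ m.IsChain R ∧ m.head? = l.head? ∧ m.getLast? = l.getLast?
  | [], _ => ⟨[], nodup_nil, .nil, rfl, rfl⟩
  | a :: t, h => by
    have ht : t.IsChain R := h.tail
    obtain ⟨m, hnd, hch, hhead, hlast⟩ := ht.exists_nodup
    by_cases ha : a ∈ m
    -- cut out the loop from `a` back to its occurrence in `m`
    · obtain ⟨s, u, rfl⟩ := append_of_mem ha
      refine ⟨a :: u, hnd.sublist (sublist_append_right s _), hch.suffix (suffix_append s _),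
        rfl, ?_⟩
      have hu : t.getLast? = (a :: u).getLast? := by rw [← hlast, getLast?_append_cons]
      rw [getLast?_cons (l := t), hu, getLast?_cons, Option.getD_some]
    · refine ⟨a :: m, nodup_cons.mpr ⟨ha, hnd⟩, hch.cons (hhead ▸ h.rel_head?), rfl, ?_⟩
      rw [getLast?_cons, getLast?_cons, hlast]

theorem zip_tail_append_singleton (x : α) : ∀ {l : List α} (hl : l ≠ []),
    l.zip (l.tail ++ [x]) = l.zip l.tail ++ [(l.getLast hl, x)]
  | [_], _ => rfl
  | a :: b :: t, _ => by
    have ih := zip_tail_append_singleton x (l := b :: t) (cons_ne_nil _ _)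
    rw [tail_cons] at ih
    simp [ih]

end List

theorem cycEdges_eq_zip_tail_append {l : List ℕ} (hl : l ≠ []) :
    cycEdges l = l.zip l.tail ++ [(l.getLastD 0, l.headD 0)] := by
  obtain ⟨a, t, rfl⟩ := List.exists_cons_of_ne_nil hl
  rw [cycEdges, List.rotate_cons_succ, List.rotate_zero]
  exact (List.zip_tail_append_singleton a hl).trans <| by
    simp [List.getLast?_eq_some_getLast hl]

theorem cycEdges_rotate (l : List ℕ) (n : ℕ) :
    cycEdges (l.rotate n) = (cycEdges l).rotate n := by
  have h : l.length = (l.rotate 1).length := by simp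
  rw [cycEdges, cycEdges, List.zip_eq_zipWith, List.zip_eq_zipWith,
    List.rotate_rotate, Nat.add_comm n 1, ← List.rotate_rotate,
    ← List.zipWith_rotate_distrib _ _ _ _ h]

theorem length_cycEdges (l : List ℕ) : (cycEdges l).length = l.length := by
  simp [cycEdges]

theorem exists_rotate_closing_edge_eq {l : List ℕ} {e : ℕ × ℕ} (he : e ∈ cycEdges l) :
    ∃ n, ((l.rotate n).getLastD 0, (l.rotate n).headD 0) = e := by
  obtain ⟨s, t, hst⟩ := List.append_of_mem he
  refine ⟨(s ++ [e]).length, ?_⟩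
  have hl : l.rotate (s ++ [e]).length ≠ [] := by
    rw [← List.length_pos_iff, List.length_rotate, ← length_cycEdges, hst]
    simp
  have h := cycEdges_eq_zip_tail_append hl
  rw [cycEdges_rotate, hst, ← List.singleton_append, ← List.append_assoc,
    List.rotate_append_length_eq] at h
  simpa using (congrArg List.getLast? h).symm

section

variable {E : ℕ → ℕ → Prop} {χ : ℕ → ℕ → Bool}

theorem IsCycle.rotate {l : List ℕ} (h : IsCycle E l) (n : ℕ) : IsCycle E (l.rotate n) :=
  ⟨by simpa using h.1, fun p hp => h.2 p <| by
    rwa [cycEdges_rotate, List.mem_rotate] at hp⟩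

theorem numZeroEdges_rotate (l : List ℕ) (n : ℕ) :
    numZeroEdges χ (l.rotate n) = numZeroEdges χ l := by
  rw [numZeroEdges, numZeroEdges, cycEdges_rotate, ((List.rotate_perm _ n).filter _).length_eq]

theorem isCycle_iff_isChain {l : List ℕ} (hl : 3 ≤ l.length) :
    IsCycle E l ↔ l.IsChain E ∧ E (l.getLastD 0) (l.headD 0) := by
  have hne : l ≠ [] := by rintro rfl; simp at hl
  rw [IsCycle, cycEdges_eq_zip_tail_append hne, List.forall_mem_append,
    List.forall_mem_singleton, List.isChain_iff_forall_mem_zip_tail]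
  exact and_iff_right hl

theorem numZeroEdges_eq_one_iff {l : List ℕ} (hl : l ≠ [])
    (hχ : χ (l.getLastD 0) (l.headD 0) = false) :
    numZeroEdges χ l = 1 ↔ ∀ p ∈ l.zip l.tail, χ p.1 p.2 = true := by
  rw [numZeroEdges, cycEdges_eq_zip_tail_append hl, List.filter_append, List.filter_singleton, hχ]
  simp [List.filter_eq_nil_iff]

theorem exists_isCycle_nodup_of_violatesTrans (hEsym : ∀ ⦃i j⦄, E i j → E j i)
    (hχsym : ∀ i j, χ i j = χ j i) (hEirrefl : ∀ i, ¬E i i) (h : ViolatesTrans E χ) :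
    ∃ l : List ℕ, IsCycle E l ∧ l.Nodup ∧ numZeroEdges χ l = 1 := by
  obtain ⟨l, hlen, hE, hχ, hEend, hχend⟩ := h
  have hpath : l.IsChain (fun i j => E i j ∧ χ i j = true) :=
    List.isChain_iff_forall_mem_zip_tail.2 fun p hp =>
      ⟨List.isChain_iff_forall_mem_zip_tail.1 hE p hp, hχ p hp⟩
  obtain ⟨m, hnd, hch, hhead, hlast⟩ := hpath.exists_nodup
  have hends : m.headD 0 = l.headD 0 ∧ m.getLastD 0 = l.getLastD 0 := by simp [hhead, hlast]
  rw [← hends.1, ← hends.2] at hEend hχend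
  have hm : 3 ≤ m.length := by
    rcases m with _ | ⟨a, _ | ⟨b, _ | ⟨c, t⟩⟩⟩
    · rw [List.head?_nil, eq_comm, List.head?_eq_none_iff] at hhead
      simp [hhead] at hlen
    · exact absurd hEend (hEirrefl a)
    · have hab : χ a b = true := (List.isChain_cons_cons.1 hch).1.2
      simp [hab] at hχend
    · simp
  have hne : m ≠ [] := List.ne_nil_of_length_pos (by omega)
  refine ⟨m, (isCycle_iff_isChain hm).2 ⟨hch.imp fun _ _ h => h.1, hEsym hEend⟩, hnd,
    (numZeroEdges_eq_one_iff hne (by rwa [hχsym])).2 fun p hp => ?_⟩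
  exact (List.isChain_iff_forall_mem_zip_tail.1 hch p hp).2

theorem violatesTrans_of_isCycle (hEsym : ∀ ⦃i j⦄, E i j → E j i) (hχsym : ∀ i j, χ i j = χ j i)
    {l : List ℕ} (hcyc : IsCycle E l) (hone : numZeroEdges χ l = 1) : ViolatesTrans E χ := by
  obtain ⟨e, he, hχe⟩ : ∃ e ∈ cycEdges l, χ e.1 e.2 = false := by
    obtain ⟨e, he⟩ := List.length_eq_one_iff.1 hone
    have := List.mem_filter.1 (he ▸ List.mem_singleton_self e)
    exact ⟨e, this.1, by simpa using this.2⟩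
  obtain ⟨n, rfl⟩ := exists_rotate_closing_edge_eq he
  set m := l.rotate n
  have hm : 3 ≤ m.length := by simpa [m] using hcyc.1
  have hne : m ≠ [] := List.ne_nil_of_length_pos (by omega)
  obtain ⟨hch, hE⟩ := (isCycle_iff_isChain hm).1 (hcyc.rotate n)
  have hones := (numZeroEdges_eq_one_iff hne hχe).1 ((numZeroEdges_rotate l n).trans hone)
  exact ⟨m, hm, hch, hones, hEsym hE, by rwa [hχsym]⟩

end

theorem stmt1 (N : ℕ) (E : ℕ → ℕ → Prop) (χ : ℕ → ℕ → Bool)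
    (hEsym : Symmetric E) (hχsym : ∀ i j, χ i j = χ j i)
    (hEdom : ∀ i j, E i j → i < N ∧ j < N ∧ i ≠ j) :
    ViolatesTrans E χ ↔
      ∃ l : List ℕ, IsCycle E l ∧ l.Nodup ∧ numZeroEdges χ l = 1 :=
  ⟨exists_isCycle_nodup_of_violatesTrans hEsym hχsym fun i h => (hEdom i i h).2.2 rfl,
    fun ⟨_, hcyc, _, hone⟩ => violatesTrans_of_isCycle hEsym hχsym hcyc hone⟩
end

section
/- Classifying the unit faces F_{i,j} of the mesh by the parities of i and j into four classes (EE, EO, OE, OO), faces within the same class are pairwise vertex-disjoint; hence any set S of split faces contains a vertex-independent subset of size at least |S|/4, so any equal partition of the mesh edges yields at least (n-3)/8 pairwise vertex-independent split faces. -/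
/-- The edge set of the `n × n` mesh graph `M_n` on the vertices
`{0,…,n-1} × {0,…,n-1}` (edges join vertices at `L¹`-distance 1). -/
def meshEdges (n : ℕ) : Set (Sym2 (ℕ × ℕ)) :=
  {e | ∃ a b : ℕ × ℕ, a.1 < n ∧ a.2 < n ∧ b.1 < n ∧ b.2 < n ∧
        ((a.1 : ℤ) - (b.1 : ℤ)).natAbs + ((a.2 : ℤ) - (b.2 : ℤ)).natAbs = 1 ∧
        e = s(a, b)}

/-- The four border edges of the unit face `F_{i,j}` of the mesh. -/
def faceBorder (i j : ℕ) : Set (Sym2 (ℕ × ℕ)) :=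
  {s((i, j), (i, j + 1)), s((i, j), (i + 1, j)),
   s((i, j + 1), (i + 1, j + 1)), s((i + 1, j), (i + 1, j + 1))}

/-- The unit face `F_{i,j}` is split with respect to the edge partition `(A, B)`:
it has at least one border edge in `A` and at least one in `B`. -/
def SplitFace (A B : Set (Sym2 (ℕ × ℕ))) (i j : ℕ) : Prop :=
  (faceBorder i j ∩ A).Nonempty ∧ (faceBorder i j ∩ B).Nonempty

/-- The four corner vertices of the unit face `F_{i,j}` of the mesh. -/
def faceVerts (i j : ℕ) : Set (ℕ × ℕ) :=
  {(i, j), (i, j + 1), (i + 1, j), (i + 1, j + 1)}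

lemma part1 (i j i₂ j₂ : ℕ) (h1 : i % 2 = i₂ % 2) (h2 : j % 2 = j₂ % 2)
    (hne : (i, j) ≠ (i₂, j₂)) : faceVerts i j ∩ faceVerts i₂ j₂ = ∅ := by
  have hne' : ¬ (i = i₂ ∧ j = j₂) := by simpa [Prod.ext_iff] using hne
  ext ⟨x, y⟩
  simp only [faceVerts, Set.mem_inter_iff, Set.mem_insert_iff, Set.mem_singleton_iff,
    Prod.mk.injEq, Set.mem_empty_iff_false, iff_false]
  omega

lemma part2 (S : Set (ℕ × ℕ)) (hfin : S.Finite) :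
    ∃ T ⊆ S,
      (∀ p ∈ T, ∀ q ∈ T, p.1 % 2 = q.1 % 2 ∧ p.2 % 2 = q.2 % 2) ∧
      (S.ncard : ℝ) / 4 ≤ (T.ncard : ℝ) := by
  classical
  set C : ℕ → ℕ → Set (ℕ × ℕ) := fun a b => {p ∈ S | p.1 % 2 = a ∧ p.2 % 2 = b} with hC
  have hsub : ∀ a b, C a b ⊆ S := fun a b p hp => hp.1
  have hfin' : ∀ a b, (C a b).Finite := fun a b => hfin.subset (hsub a b)
  have hcover : S ⊆ C 0 0 ∪ C 0 1 ∪ C 1 0 ∪ C 1 1 := by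
    intro p hp
    simp only [Set.mem_union, hC, Set.mem_setOf_eq, hp, true_and]
    omega
  have hle : S.ncard ≤ (C 0 0).ncard + (C 0 1).ncard + (C 1 0).ncard + (C 1 1).ncard := by
    calc S.ncard ≤ (C 0 0 ∪ C 0 1 ∪ C 1 0 ∪ C 1 1).ncard :=
          Set.ncard_le_ncard hcover
            ((((hfin' 0 0).union (hfin' 0 1)).union (hfin' 1 0)).union (hfin' 1 1))
      _ ≤ (C 0 0 ∪ C 0 1 ∪ C 1 0).ncard + (C 1 1).ncard := Set.ncard_union_le _ _
      _ ≤ (C 0 0 ∪ C 0 1).ncard + (C 1 0).ncard + (C 1 1).ncard := by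
          have := Set.ncard_union_le (C 0 0 ∪ C 0 1) (C 1 0); omega
      _ ≤ (C 0 0).ncard + (C 0 1).ncard + (C 1 0).ncard + (C 1 1).ncard := by
          have := Set.ncard_union_le (C 0 0) (C 0 1); omega
  have key : ∃ a b, a < 2 ∧ b < 2 ∧ S.ncard ≤ 4 * (C a b).ncard := by
    by_contra h
    push_neg at h
    have h00 := h 0 0; have h01 := h 0 1; have h10 := h 1 0; have h11 := h 1 1
    omega
  obtain ⟨a, b, _, _, hab⟩ := key
  refine ⟨C a b, hsub a b, ?_, ?_⟩
  · intro p hp q hq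
    exact ⟨hp.2.1.trans hq.2.1.symm, hp.2.2.trans hq.2.2.symm⟩
  · rw [div_le_iff₀ (by norm_num)]
    calc (S.ncard : ℝ) ≤ 4 * (C a b).ncard := by exact_mod_cast hab
      _ = (C a b).ncard * 4 := by ring

lemma faceBorder_subset_mesh {n i j : ℕ} (hi : i < n - 1) (hj : j < n - 1) :
    faceBorder i j ⊆ meshEdges n := by
  intro e he
  simp only [faceBorder, Set.mem_insert_iff, Set.mem_singleton_iff] at he
  rcases he with h | h | h | h
  · exact ⟨(i, j), (i, j + 1), by omega, by omega, by omega, by omega, by simp, h⟩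
  · exact ⟨(i, j), (i + 1, j), by omega, by omega, by omega, by omega, by simp, h⟩
  · exact ⟨(i, j + 1), (i + 1, j + 1), by omega, by omega, by omega, by omega, by simp, h⟩
  · exact ⟨(i + 1, j), (i + 1, j + 1), by omega, by omega, by omega, by omega, by simp, h⟩

lemma mesh_edge_cases {n : ℕ} {e : Sym2 (ℕ × ℕ)} (he : e ∈ meshEdges n) :
    (∃ i j, i < n ∧ j + 1 < n ∧ e = s((i, j), (i, j + 1))) ∨
    (∃ i j, i + 1 < n ∧ j < n ∧ e = s((i, j), (i + 1, j))) := by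
  obtain ⟨a, b, ha1, ha2, hb1, hb2, hd, hee⟩ := he
  have hcases : (a.1 = b.1 ∧ (a.2 = b.2 + 1 ∨ b.2 = a.2 + 1)) ∨
      (a.2 = b.2 ∧ (a.1 = b.1 + 1 ∨ b.1 = a.1 + 1)) := by omega
  rcases hcases with ⟨h1, h2 | h2⟩ | ⟨h1, h2 | h2⟩
  · exact Or.inl ⟨a.1, b.2, ha1, by omega, by
      rw [hee]; simp [Sym2.eq_iff, Prod.ext_iff]; omega⟩
  · exact Or.inl ⟨a.1, a.2, ha1, by omega, by
      rw [hee]; simp [Sym2.eq_iff, Prod.ext_iff]; omega⟩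
  · exact Or.inr ⟨b.1, a.2, by omega, by omega, by
      rw [hee]; simp [Sym2.eq_iff, Prod.ext_iff]; omega⟩
  · exact Or.inr ⟨a.1, a.2, by omega, by omega, by
      rw [hee]; simp [Sym2.eq_iff, Prod.ext_iff]; omega⟩

lemma chain {α : Type*} (A B : Set α) (hDis : Disjoint A B) (m : ℕ) (F : ℕ → Set α)
    (dich : ∀ i, i < m → F i ⊆ A ∨ F i ⊆ B)
    (share : ∀ i, i + 1 < m → ∃ e, e ∈ F i ∧ e ∈ F (i + 1)) :
    ∀ i, i < m → (F i ⊆ A ↔ F 0 ⊆ A) := by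
  intro i
  induction i with
  | zero => exact fun _ => Iff.rfl
  | succ i ih =>
    intro hi
    have hi' : i < m := by omega
    obtain ⟨e, he1, he2⟩ := share i hi
    rcases dich i hi' with hA | hB <;> rcases dich (i + 1) hi with hA' | hB'
    · simp [hA', (ih hi').mp hA]
    · exact absurd (hB' he2) (Set.disjoint_left.mp hDis (hA he1))
    · exact absurd (hB he1) (Set.disjoint_left.mp hDis (hA' he2))
    · exact iff_of_false (fun h => (Set.disjoint_left.mp hDis (h he2)) (hB' he2))
        (fun h => (Set.disjoint_left.mp hDis ((ih hi').mpr h he1)) (hB he1))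

lemma core (n : ℕ) (A B : Set (Sym2 (ℕ × ℕ)))
    (hUn : A ∪ B = meshEdges n) (hDis : Disjoint A B)
    (hBcard : B.ncard = n * (n - 1)) (hn : 4 ≤ n)
    (S : Set (ℕ × ℕ)) (hSfin : S.Finite)
    (hSdef : ∀ i j, (i, j) ∈ S ↔ i < n - 1 ∧ j < n - 1 ∧ SplitFace A B i j)
    (hcard : (Prod.fst '' S).ncard + (Prod.snd '' S).ncard + 2 ≤ n)
    (i0 j0 : ℕ) (hi0 : i0 < n - 1) (hj0 : j0 < n - 1)
    (hr0 : j0 ∉ Prod.snd '' S) (hc0 : i0 ∉ Prod.fst '' S)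
    (hA0 : faceBorder i0 j0 ⊆ A) : False := by
  classical
  -- dichotomy for unsplit faces
  have dich : ∀ i j, i < n - 1 → j < n - 1 → (i, j) ∉ S →
      faceBorder i j ⊆ A ∨ faceBorder i j ⊆ B := by
    intro i j hi hj hnot
    have hns : ¬ SplitFace A B i j := fun hs => hnot ((hSdef i j).mpr ⟨hi, hj, hs⟩)
    rw [SplitFace, not_and_or] at hns
    have hm : faceBorder i j ⊆ A ∪ B := by
      rw [hUn]; exact faceBorder_subset_mesh hi hj
    rcases hns with h | h
    · right
      rw [Set.not_nonempty_iff_eq_empty] at h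
      intro e he
      rcases hm he with hA | hB
      · exact absurd (Set.mem_inter he hA) (by rw [h]; exact Set.notMem_empty e)
      · exact hB
    · left
      rw [Set.not_nonempty_iff_eq_empty] at h
      intro e he
      rcases hm he with hA | hB
      · exact hA
      · exact absurd (Set.mem_inter he hB) (by rw [h]; exact Set.notMem_empty e)
  -- unsplit rows/columns from non-membership in images
  have rowU : ∀ j, j ∉ Prod.snd '' S → ∀ i, i < n - 1 → (i, j) ∉ S :=
    fun j hj i _ hmem => hj ⟨(i, j), hmem, rfl⟩
  have colU : ∀ i, i ∉ Prod.fst '' S → ∀ j, j < n - 1 → (i, j) ∉ S :=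
    fun i hi j _ hmem => hi ⟨(i, j), hmem, rfl⟩
  -- chains along unsplit rows and columns
  have rowEq : ∀ j, j < n - 1 → j ∉ Prod.snd '' S → ∀ i i', i < n - 1 → i' < n - 1 →
      (faceBorder i j ⊆ A ↔ faceBorder i' j ⊆ A) := by
    intro j hj hU i i' hi hi'
    have h := chain A B hDis (n - 1) (fun i => faceBorder i j)
      (fun i hi => dich i j hi hj (rowU j hU i hi))
      (fun i hi => ⟨s((i + 1, j), (i + 1, j + 1)), by simp [faceBorder], by simp [faceBorder]⟩)
    exact (h i hi).trans (h i' hi').symm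
  have colEq : ∀ i, i < n - 1 → i ∉ Prod.fst '' S → ∀ j j', j < n - 1 → j' < n - 1 →
      (faceBorder i j ⊆ A ↔ faceBorder i j' ⊆ A) := by
    intro i hi hU j j' hj hj'
    have h := chain A B hDis (n - 1) (fun j => faceBorder i j)
      (fun j hj => dich i j hi hj (colU i hU j hj))
      (fun j hj => ⟨s((i, j + 1), (i + 1, j + 1)), by simp [faceBorder], by simp [faceBorder]⟩)
    exact (h j hj).trans (h j' hj').symm
  -- all faces in the unsplit column i0 are A
  have hcolA : ∀ j, j < n - 1 → faceBorder i0 j ⊆ A :=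
    fun j hj => (colEq i0 hi0 hc0 j j0 hj hj0).mpr hA0
  -- all faces in any unsplit row are A
  have hrowAll : ∀ j, j < n - 1 → j ∉ Prod.snd '' S → ∀ i, i < n - 1 → faceBorder i j ⊆ A :=
    fun j hj hU i hi => (rowEq j hj hU i i0 hi hi0).mpr (hcolA j hj)
  -- all faces in the unsplit row j0 are A
  have hrowA : ∀ i, i < n - 1 → faceBorder i j0 ⊆ A := hrowAll j0 hj0 hr0
  -- all faces in any unsplit column are A
  have hcolAll : ∀ i, i < n - 1 → i ∉ Prod.fst '' S → ∀ j, j < n - 1 → faceBorder i j ⊆ A :=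
    fun i hi hU j hj => (colEq i hi hU j j0 hj hj0).mpr (hrowA i hi)
  -- a vertical B-edge forces its row to be split
  have hvert : ∀ i j, i < n → j + 1 < n → s((i, j), (i, j + 1)) ∈ B → j ∈ Prod.snd '' S := by
    intro i j hi hj hB'
    by_contra hjs
    have hj' : j < n - 1 := by omega
    have hall := hrowAll j hj' hjs
    have heA : s((i, j), (i, j + 1)) ∈ A := by
      rcases lt_or_ge i (n - 1) with h | h
      · exact hall i h (by simp [faceBorder])
      · have hi' : i - 1 < n - 1 := by omega
        have hin : s((i, j), (i, j + 1)) ∈ faceBorder (i - 1) j := by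
          rw [show i = i - 1 + 1 by omega]
          simp [faceBorder]
        exact hall (i - 1) hi' hin
    exact (Set.disjoint_left.mp hDis heA) hB'
  -- a horizontal B-edge forces its column to be split
  have hhor : ∀ i j, i + 1 < n → j < n → s((i, j), (i + 1, j)) ∈ B → i ∈ Prod.fst '' S := by
    intro i j hi hj hB'
    by_contra his
    have hi' : i < n - 1 := by omega
    have hall := hcolAll i hi' his
    have heA : s((i, j), (i + 1, j)) ∈ A := by
      rcases lt_or_ge j (n - 1) with h | h
      · exact hall j h (by simp [faceBorder])
      · have hj' : j - 1 < n - 1 := by omega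
        have hin : s((i, j), (i + 1, j)) ∈ faceBorder i (j - 1) := by
          rw [show j = j - 1 + 1 by omega]
          simp [faceBorder]
        exact hall (j - 1) hj' hin
    exact (Set.disjoint_left.mp hDis heA) hB'
  -- counting
  set Sf := hSfin.toFinset with hSfdef
  set Jf := Sf.image Prod.snd with hJfdef
  set If := Sf.image Prod.fst with hIfdef
  set Ef := ((Finset.range n ×ˢ Jf).image fun p => s((p.1, p.2), (p.1, p.2 + 1))) ∪
      ((If ×ˢ Finset.range n).image fun p => s((p.1, p.2), (p.1 + 1, p.2))) with hEfdef
  have hBsub : B ⊆ ↑Ef := by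
    intro e heB
    have hem : e ∈ meshEdges n := by rw [← hUn]; exact Or.inr heB
    rcases mesh_edge_cases hem with ⟨i, j, hi, hj, he⟩ | ⟨i, j, hi, hj, he⟩
    · have hjJ : j ∈ Prod.snd '' S := hvert i j hi hj (he ▸ heB)
      have hjJf : j ∈ Jf := by
        obtain ⟨p, hp, hpj⟩ := hjJ
        exact Finset.mem_image.mpr ⟨p, hSfin.mem_toFinset.mpr hp, hpj⟩
      rw [he]
      apply Finset.mem_coe.mpr
      apply Finset.mem_union_left
      exact Finset.mem_image.mpr ⟨(i, j),
        Finset.mem_product.mpr ⟨Finset.mem_range.mpr hi, hjJf⟩, rfl⟩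
    · have hiI : i ∈ Prod.fst '' S := hhor i j hi hj (he ▸ heB)
      have hiIf : i ∈ If := by
        obtain ⟨p, hp, hpi⟩ := hiI
        exact Finset.mem_image.mpr ⟨p, hSfin.mem_toFinset.mpr hp, hpi⟩
      rw [he]
      apply Finset.mem_coe.mpr
      apply Finset.mem_union_right
      exact Finset.mem_image.mpr ⟨(i, j),
        Finset.mem_product.mpr ⟨hiIf, Finset.mem_range.mpr hj⟩, rfl⟩
  have hcard1 : B.ncard ≤ Ef.card := by
    calc B.ncard ≤ (↑Ef : Set (Sym2 (ℕ × ℕ))).ncard :=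
          Set.ncard_le_ncard hBsub Ef.finite_toSet
      _ = Ef.card := Set.ncard_coe_finset Ef
  have hJ : Jf.card = (Prod.snd '' S).ncard := by
    rw [← Set.ncard_coe_finset, hJfdef, Finset.coe_image, Set.Finite.coe_toFinset]
  have hI : If.card = (Prod.fst '' S).ncard := by
    rw [← Set.ncard_coe_finset, hIfdef, Finset.coe_image, Set.Finite.coe_toFinset]
  have hEcard : Ef.card ≤ n * Jf.card + If.card * n := by
    calc Ef.card ≤ ((Finset.range n ×ˢ Jf).image fun p : ℕ × ℕ =>
            s((p.1, p.2), (p.1, p.2 + 1))).card +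
          ((If ×ˢ Finset.range n).image fun p : ℕ × ℕ =>
            s((p.1, p.2), (p.1 + 1, p.2))).card := Finset.card_union_le _ _
      _ ≤ (Finset.range n ×ˢ Jf).card + (If ×ˢ Finset.range n).card :=
          Nat.add_le_add (Finset.card_image_le) (Finset.card_image_le)
      _ = n * Jf.card + If.card * n := by
          rw [Finset.card_product, Finset.card_product, Finset.card_range]
  have hfinal : n * (n - 1) ≤ n * (n - 2) := by
    calc n * (n - 1) = B.ncard := hBcard.symm
      _ ≤ Ef.card := hcard1
      _ ≤ n * Jf.card + If.card * n := hEcard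
      _ = n * (Jf.card + If.card) := by ring
      _ ≤ n * (n - 2) := Nat.mul_le_mul_left n (by omega)
  have := Nat.le_of_mul_le_mul_left hfinal (by omega)
  omega

lemma dich0 (n : ℕ) (A B : Set (Sym2 (ℕ × ℕ))) (hUn : A ∪ B = meshEdges n) {i j : ℕ}
    (hi : i < n - 1) (hj : j < n - 1) (hns : ¬ SplitFace A B i j) :
    faceBorder i j ⊆ A ∨ faceBorder i j ⊆ B := by
  rw [SplitFace, not_and_or] at hns
  have hm : faceBorder i j ⊆ A ∪ B := by
    rw [hUn]; exact faceBorder_subset_mesh hi hj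
  rcases hns with h | h
  · right
    rw [Set.not_nonempty_iff_eq_empty] at h
    intro e he
    rcases hm he with hA | hB
    · exact absurd (Set.mem_inter he hA) (by rw [h]; exact Set.notMem_empty e)
    · exact hB
  · left
    rw [Set.not_nonempty_iff_eq_empty] at h
    intro e he
    rcases hm he with hA | hB
    · exact hA
    · exact absurd (Set.mem_inter he hB) (by rw [h]; exact Set.notMem_empty e)

lemma part3 (n : ℕ) (A B : Set (Sym2 (ℕ × ℕ))) (hUn : A ∪ B = meshEdges n)
    (hDis : Disjoint A B) (hA : A.ncard = n * (n - 1)) (hB : B.ncard = n * (n - 1)) :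
    n ≤ 2 * {p : ℕ × ℕ | p.1 < n - 1 ∧ p.2 < n - 1 ∧ SplitFace A B p.1 p.2}.ncard + 3 := by
  rcases le_or_gt n 3 with hn | hn
  · omega
  set S := {p : ℕ × ℕ | p.1 < n - 1 ∧ p.2 < n - 1 ∧ SplitFace A B p.1 p.2} with hS
  have hSfin : S.Finite := by
    apply ((Set.finite_Iio (n - 1)).prod (Set.finite_Iio (n - 1))).subset
    intro p hp
    exact Set.mem_prod.mpr ⟨hp.1, hp.2.1⟩
  by_contra hcon
  push_neg at hcon
  have hsmall : 2 * S.ncard + 4 ≤ n := by omega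
  have himg1 : (Prod.fst '' S).ncard ≤ S.ncard := Set.ncard_image_le hSfin
  have himg2 : (Prod.snd '' S).ncard ≤ S.ncard := Set.ncard_image_le hSfin
  have hcard : (Prod.fst '' S).ncard + (Prod.snd '' S).ncard + 2 ≤ n := by omega
  have hIio : (Set.Iio (n - 1)).ncard = n - 1 := by
    rw [← Finset.coe_range, Set.ncard_coe_finset, Finset.card_range]
  have hexJ : ∃ j0, j0 < n - 1 ∧ j0 ∉ Prod.snd '' S := by
    by_contra h
    push_neg at h
    have hsub : Set.Iio (n - 1) ⊆ Prod.snd '' S := fun j hj => h j hj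
    have := Set.ncard_le_ncard hsub (hSfin.image _)
    omega
  have hexI : ∃ i0, i0 < n - 1 ∧ i0 ∉ Prod.fst '' S := by
    by_contra h
    push_neg at h
    have hsub : Set.Iio (n - 1) ⊆ Prod.fst '' S := fun i hi => h i hi
    have := Set.ncard_le_ncard hsub (hSfin.image _)
    omega
  obtain ⟨j0, hj0, hr0⟩ := hexJ
  obtain ⟨i0, hi0, hc0⟩ := hexI
  have hSdef : ∀ i j, (i, j) ∈ S ↔ i < n - 1 ∧ j < n - 1 ∧ SplitFace A B i j := by
    intro i j; rfl
  have hns : ¬ SplitFace A B i0 j0 := by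
    intro hsp
    exact hr0 ⟨(i0, j0), (hSdef i0 j0).mpr ⟨hi0, hj0, hsp⟩, rfl⟩
  rcases dich0 n A B hUn hi0 hj0 hns with h | h
  · exact core n A B hUn hDis hB (by omega) S hSfin hSdef hcard i0 j0 hi0 hj0 hr0 hc0 h
  · have hUn' : B ∪ A = meshEdges n := by rw [Set.union_comm]; exact hUn
    have hSdef' : ∀ i j, (i, j) ∈ S ↔ i < n - 1 ∧ j < n - 1 ∧ SplitFace B A i j := by
      intro i j
      rw [hSdef i j]
      exact ⟨fun ⟨a, b, c⟩ => ⟨a, b, c.2, c.1⟩, fun ⟨a, b, c⟩ => ⟨a, b, c.2, c.1⟩⟩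
    exact core n B A hUn' hDis.symm hA (by omega) S hSfin hSdef' hcard i0 j0 hi0 hj0 hr0 hc0 h

theorem stmt17 (n : ℕ) :
    (∀ i j i₂ j₂ : ℕ, i < n - 1 → j < n - 1 → i₂ < n - 1 → j₂ < n - 1 →
        i % 2 = i₂ % 2 → j % 2 = j₂ % 2 → (i, j) ≠ (i₂, j₂) →
        faceVerts i j ∩ faceVerts i₂ j₂ = ∅) ∧
    (∀ (A B : Set (Sym2 (ℕ × ℕ))) (S : Set (ℕ × ℕ)), S.Finite →
        (∀ p ∈ S, p.1 < n - 1 ∧ p.2 < n - 1 ∧ SplitFace A B p.1 p.2) →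
        ∃ T ⊆ S,
          (∀ p ∈ T, ∀ q ∈ T, p ≠ q → faceVerts p.1 p.2 ∩ faceVerts q.1 q.2 = ∅) ∧
          (S.ncard : ℝ) / 4 ≤ (T.ncard : ℝ)) ∧
    (∀ A B : Set (Sym2 (ℕ × ℕ)), A ∪ B = meshEdges n → Disjoint A B →
        A.ncard = n * (n - 1) → B.ncard = n * (n - 1) →
        ∃ T : Set (ℕ × ℕ),
          (∀ p ∈ T, p.1 < n - 1 ∧ p.2 < n - 1 ∧ SplitFace A B p.1 p.2) ∧
          (∀ p ∈ T, ∀ q ∈ T, p ≠ q → faceVerts p.1 p.2 ∩ faceVerts q.1 q.2 = ∅) ∧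
          ((n : ℝ) - 3) / 8 ≤ (T.ncard : ℝ)) := by
  constructor
  · intro i j i₂ j₂ _ _ _ _ h1 h2 hne
    exact part1 i j i₂ j₂ h1 h2 hne
  constructor
  · intro A B S hfin hS
    obtain ⟨T, hTS, hpar, hcard⟩ := part2 S hfin
    refine ⟨T, hTS, ?_, hcard⟩
    intro p hp q hq hne
    exact part1 p.1 p.2 q.1 q.2 (hpar p hp q hq).1 (hpar p hp q hq).2 (by simpa using hne)
  · intro A B hUn hDis hA hB
    set S := {p : ℕ × ℕ | p.1 < n - 1 ∧ p.2 < n - 1 ∧ SplitFace A B p.1 p.2} with hSdef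
    have hSfin : S.Finite := by
      apply ((Set.finite_Iio (n - 1)).prod (Set.finite_Iio (n - 1))).subset
      intro p hp
      exact Set.mem_prod.mpr ⟨hp.1, hp.2.1⟩
    obtain ⟨T, hTS, hpar, hcardT⟩ := part2 S hSfin
    refine ⟨T, fun p hp => hTS hp, ?_, ?_⟩
    · intro p hp q hq hne
      exact part1 p.1 p.2 q.1 q.2 (hpar p hp q hq).1 (hpar p hp q hq).2 (by simpa using hne)
    · have hnum : n ≤ 2 * S.ncard + 3 := part3 n A B hUn hDis hA hB
      have h1 : ((n : ℝ) - 3) / 8 ≤ (S.ncard : ℝ) / 4 := by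
        have : (n : ℝ) ≤ 2 * S.ncard + 3 := by exact_mod_cast hnum
        linarith
      linarith
end
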